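/- Let X be a random d×d Hermitian matrix with E X = 0 and ‖X‖ ≤ c almost surely for some c > 0. Then for every θ ∈ ℝ, E[exp(θ X)] ⪯ exp( ψ_{P,c}(|θ|) · E[X²] ), and consequently log E[exp(θ X)] ⪯ ψ_{P,c}(|θ|) · E[X²], where ψ_{P,c}(u) := (e^{cu} − cu − 1)/c². -/

import Mathlib

open MeasureTheory ProbabilityTheory Matrix
open scoped ComplexOrder

noncomputable section

/-- `d × d` complex matrices. -/
abbrev Mat (d : ℕ) := Matrix (Fin d) (Fin d) ℂ

instance {d : ℕ} : MeasurableSpace (Mat d) :=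
  show MeasurableSpace (Fin d → Fin d → ℂ) from inferInstance

/-- Spectral functional calculus `f(A) = U f(D) U*` for a Hermitian matrix `A`
(junk value `0` if `A` is not Hermitian). -/
def matFun {d : ℕ} (f : ℝ → ℝ) (A : Mat d) : Mat d :=
  if h : A.IsHermitian then h.cfc f else 0

/-- Largest eigenvalue of a Hermitian matrix (junk value `0` if not Hermitian). -/
def lamMax {d : ℕ} (A : Mat d) : ℝ :=
  if h : A.IsHermitian then ⨆ i, h.eigenvalues i else 0

/-- Spectral (operator) norm of a Hermitian matrix: the largest absolute value of an
eigenvalue (junk value `0` if not Hermitian). -/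
def opNorm {d : ℕ} (A : Mat d) : ℝ :=
  if h : A.IsHermitian then ⨆ i, |h.eigenvalues i| else 0

/-- Real trace of a matrix. -/
def rtrace {d : ℕ} (A : Mat d) : ℝ := (Matrix.trace A).re

/-- Loewner partial order: `A ⪯ B` iff `B - A` is positive semidefinite. -/
def loewnerLE {d : ℕ} (A B : Mat d) : Prop := (B - A).PosSemidef

/-- Entrywise (Bochner) expectation of a random matrix. -/
def matInt {Ω : Type*} [MeasurableSpace Ω] (μ : Measure Ω) {d : ℕ} (X : Ω → Mat d) : Mat d :=
  Matrix.of fun p q => ∫ ω, X ω p q ∂μ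

/-- `φ(u) = e^u - u - 1`. -/
def phiFun (u : ℝ) : ℝ := Real.exp u - u - 1

/-- `ϕ(u) = cosh u - 1`. -/
def varphiFun (u : ℝ) : ℝ := Real.cosh u - 1

/-- `p(u) = min (-u) 1`. -/
def pFun (u : ℝ) : ℝ := min (-u) 1

end

/-!
For `|x| ≤ c` the scalar inequality `exp (θ x) ≤ 1 + θ x + ψ x²`, `ψ = ψ_{P,c}(|θ|)`, holds
because `(e^u - u - 1) / u²` is increasing in `|u|` (compare the power series termwise). Applied
to the eigenvalues of `X` it becomes `exp (θ X) ⪯ 1 + θ X + ψ X²`; expectation is monotone for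
`⪯` and `E X = 0`, so `E exp (θ X) ⪯ 1 + ψ E X² ⪯ exp (ψ E X²)` by `1 + y ≤ e^y`.
For the logarithm, `E exp (θ X) ⪰ e^{-c|θ|} > 0`, so `log y ≤ y - 1` on its spectrum gives
`log E exp (θ X) ⪯ E exp (θ X) - 1 ⪯ ψ E X²`, without operator monotonicity of `log`.
-/

open scoped MatrixOrder Nat

noncomputable def psiP (c u : ℝ) : ℝ := (Real.exp (c * u) - c * u - 1) / c ^ 2

lemma exp_sub_sub_one_eq_tsum (u : ℝ) :
    Real.exp u - u - 1 = ∑' n : ℕ, u ^ (n + 2) / (n + 2)! := by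
  have hs := Real.summable_pow_div_factorial u
  rw [Real.exp_eq_exp_ℝ, NormedSpace.exp_eq_tsum_div]
  beta_reduce
  rw [hs.tsum_eq_zero_add, ((summable_nat_add_iff 1).2 hs).tsum_eq_zero_add]
  simp only [pow_zero, Nat.factorial_zero, Nat.cast_one, div_one, zero_add, pow_one,
    Nat.factorial_one]
  ring

lemma exp_sub_sub_one_le_of_abs_le {u t : ℝ} (ht : 0 < t) (h : |u| ≤ t) :
    Real.exp u - u - 1 ≤ (Real.exp t - t - 1) * (u / t) ^ 2 := by
  have hsum (v : ℝ) : Summable fun n : ℕ => v ^ (n + 2) / (n + 2)! :=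
    (summable_nat_add_iff 2).2 (Real.summable_pow_div_factorial v)
  rw [exp_sub_sub_one_eq_tsum, exp_sub_sub_one_eq_tsum, ← tsum_mul_right]
  refine (hsum u).tsum_le_tsum (fun n => ?_) ((hsum t).mul_right _)
  have hpow : u ^ (n + 2) ≤ u ^ 2 * t ^ n :=
    calc u ^ (n + 2) ≤ |u| ^ (n + 2) := (le_abs_self _).trans (abs_pow u _).le
      _ = u ^ 2 * |u| ^ n := by rw [pow_add, sq_abs, mul_comm]
      _ ≤ u ^ 2 * t ^ n := by gcongr
  calc u ^ (n + 2) / (n + 2)! ≤ u ^ 2 * t ^ n / (n + 2)! := by gcongr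
    _ = t ^ (n + 2) / (n + 2)! * (u / t) ^ 2 := by field_simp; ring

lemma abs_mul_le_of_abs_le {c θ x : ℝ} (hx : |x| ≤ c) : |θ * x| ≤ c * |θ| := by
  rw [abs_mul, mul_comm c]
  exact mul_le_mul_of_nonneg_left hx (abs_nonneg θ)

lemma exp_mul_le_one_add_add_psiP_mul_sq {c : ℝ} (hc : 0 < c) (θ : ℝ) {x : ℝ} (hx : |x| ≤ c) :
    Real.exp (θ * x) ≤ 1 + θ * x + psiP c |θ| * x ^ 2 := by
  rcases eq_or_ne θ 0 with rfl | hθ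
  · simp [psiP]
  have hcmp := exp_sub_sub_one_le_of_abs_le (by positivity) (abs_mul_le_of_abs_le (θ := θ) hx)
  have hψ : (Real.exp (c * |θ|) - c * |θ| - 1) * (θ * x / (c * |θ|)) ^ 2 = psiP c |θ| * x ^ 2 := by
    rw [psiP, div_pow, mul_pow, mul_pow, sq_abs]
    field_simp
  linarith

section FunctionalCalculus

variable {n 𝕜 : Type*} [Fintype n] [DecidableEq n] [RCLike 𝕜] {A : Matrix n n 𝕜}

theorem Matrix.cfc_le_cfc {f g : ℝ → ℝ} (h : ∀ x ∈ spectrum ℝ A, f x ≤ g x) :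
    cfc f A ≤ cfc g A :=
  cfc_mono h (finite_real_spectrum.continuousOn _) (finite_real_spectrum.continuousOn _)

theorem Matrix.IsHermitian.norm_cfc_apply_le (hA : A.IsHermitian) {f : ℝ → ℝ} {K : ℝ}
    (hK : ∀ x ∈ spectrum ℝ A, |f x| ≤ K) (i j : n) :
    ‖cfc f A i j‖ ≤ Fintype.card n * K := by
  set U : Matrix n n 𝕜 := (hA.eigenvectorUnitary : Matrix n n 𝕜)
  have hU : U ∈ unitaryGroup n 𝕜 := hA.eigenvectorUnitary.2
  have hentry : cfc f A i j = ∑ k, U i k * (f (hA.eigenvalues k) : 𝕜) * star (U j k) := by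
    rw [hA.cfc_eq, IsHermitian.cfc, Unitary.conjStarAlgAut_apply, star_eq_conjTranspose,
      mul_apply]
    simp [U, mul_diagonal, mul_assoc]
  have hterm : ∀ k, ‖U i k * (f (hA.eigenvalues k) : 𝕜) * star (U j k)‖ ≤ K := fun k => by
    have hk : |f (hA.eigenvalues k)| ≤ K :=
      hK _ (hA.spectrum_real_eq_range_eigenvalues ▸ Set.mem_range_self k)
    rw [norm_mul, norm_mul, norm_star, RCLike.norm_ofReal]
    have hK0 : 0 ≤ K := (abs_nonneg _).trans hk
    calc ‖U i k‖ * |f (hA.eigenvalues k)| * ‖U j k‖ ≤ 1 * K * 1 := by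
          gcongr
          · exact entry_norm_bound_of_unitary hU i k
          · exact entry_norm_bound_of_unitary hU j k
      _ = K := by ring
  rw [hentry]
  exact (norm_sum_le _ _).trans <| (Finset.sum_le_sum fun k _ => hterm k).trans (by simp)

theorem Matrix.IsHermitian.cfc_quadratic (hA : A.IsHermitian) (a b : ℝ) :
    cfc (fun x : ℝ => 1 + a * x + b * x ^ 2) A = 1 + a • A + b • A ^ 2 := by
  rw [cfc_add .., cfc_const_add .., cfc_const_mul_id .., cfc_const_mul .., cfc_pow_id ..,
    map_one]

theorem Matrix.IsHermitian.one_add_le_cfc_exp (hA : A.IsHermitian) : 1 + A ≤ cfc Real.exp A := by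
  calc 1 + A = cfc (fun x : ℝ => 1 + x) A := by rw [cfc_const_add .., cfc_id' .., map_one]
    _ ≤ cfc Real.exp A := cfc_le_cfc fun x _ => by linarith [Real.add_one_le_exp x]

theorem Matrix.IsHermitian.cfc_log_le_sub_one (hA : A.IsHermitian) {ε : ℝ} (hε : 0 < ε)
    (h : algebraMap ℝ (Matrix n n 𝕜) ε ≤ A) : cfc Real.log A ≤ A - 1 := by
  have hspec := (algebraMap_le_iff_le_spectrum hA.isSelfAdjoint).1 h
  calc cfc Real.log A ≤ cfc (fun x : ℝ => x - 1) A :=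
        cfc_le_cfc fun x hx => Real.log_le_sub_one_of_pos (hε.trans_le (hspec x hx))
    _ = A - 1 := by rw [cfc_sub .., cfc_id' .., cfc_const_one ..]

end FunctionalCalculus

section RandomMatrix

variable {d : ℕ}

theorem loewnerLE_iff {A B : Mat d} : loewnerLE A B ↔ A ≤ B := Iff.rfl

theorem matFun_eq_cfc (f : ℝ → ℝ) {A : Mat d} (hA : A.IsHermitian) : matFun f A = cfc f A := by
  rw [matFun, dif_pos hA, hA.cfc_eq]

theorem abs_le_of_mem_spectrum_of_opNorm_le {A : Mat d} (hA : A.IsHermitian) {c : ℝ}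
    (h : opNorm A ≤ c) : ∀ x ∈ spectrum ℝ A, |x| ≤ c := by
  rw [hA.spectrum_real_eq_range_eigenvalues]
  rintro _ ⟨i, rfl⟩
  rw [opNorm, dif_pos hA] at h
  exact (le_ciSup (Set.finite_range _).bddAbove i).trans h

theorem matFun_exp_smul {A : Mat d} (hA : A.IsHermitian) (θ : ℝ) :
    matFun Real.exp (θ • A) = cfc (fun x => Real.exp (θ * x)) A := by
  rw [matFun_eq_cfc _ (hA.smul (.all θ)), ← cfc_comp_smul ..]
  rfl

theorem matFun_exp_eq_exp {A : Mat d} (hA : A.IsHermitian) :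
    matFun Real.exp A = NormedSpace.exp A := by
  rw [matFun_eq_cfc _ hA]
  exact @CFC.real_exp_eq_normedSpace_exp _ Matrix.linftyOpNormedRing _ Matrix.linftyOpNormedAlgebra
    IsHermitian.instContinuousFunctionalCalculus _ hA.isSelfAdjoint

instance : BorelSpace (Mat d) := Pi.borelSpace

variable {Ω : Type*} [MeasurableSpace Ω] {μ : Measure Ω} {Y Z : Ω → Mat d}

-- Any norm would do: it only serves to make `NormedSpace.exp` continuous.
theorem measurable_matFun_exp_smul {X : Ω → Mat d} (hX : Measurable X)
    (hherm : ∀ ω, (X ω).IsHermitian) (θ : ℝ) :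
    Measurable fun ω => matFun Real.exp (θ • X ω) := by
  letI : NormedRing (Mat d) := Matrix.linftyOpNormedRing
  letI : NormedAlgebra ℝ (Mat d) := Matrix.linftyOpNormedAlgebra
  letI : NormedAlgebra ℚ (Mat d) := Matrix.linftyOpNormedAlgebra
  have hcont : Continuous fun A : Mat d => NormedSpace.exp (θ • A) :=
    NormedSpace.exp_continuous.comp (continuous_const_smul θ)
  simp_rw [fun ω => matFun_exp_eq_exp ((hherm ω).smul (.all θ))]
  exact hcont.measurable.comp hX

theorem integrable_apply_of_ae_norm_le [IsFiniteMeasure μ] (hY : Measurable Y) {K : ℝ}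
    (hK : ∀ᵐ ω ∂μ, ∀ i j, ‖Y ω i j‖ ≤ K) (i j : Fin d) :
    Integrable (fun ω => Y ω i j) μ :=
  Integrable.of_bound (hY.eval.eval).aestronglyMeasurable K (hK.mono fun _ h => h i j)

theorem matInt_add (hY : ∀ i j, Integrable (fun ω => Y ω i j) μ)
    (hZ : ∀ i j, Integrable (fun ω => Z ω i j) μ) :
    matInt μ (fun ω => Y ω + Z ω) = matInt μ Y + matInt μ Z := by
  ext i j
  exact integral_add (hY i j) (hZ i j)

theorem matInt_sub (hY : ∀ i j, Integrable (fun ω => Y ω i j) μ)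
    (hZ : ∀ i j, Integrable (fun ω => Z ω i j) μ) :
    matInt μ (fun ω => Y ω - Z ω) = matInt μ Y - matInt μ Z := by
  ext i j
  exact integral_sub (hY i j) (hZ i j)

theorem matInt_smul (r : ℝ) : matInt μ (fun ω => r • Y ω) = r • matInt μ Y := by
  ext i j
  exact integral_smul r _

theorem matInt_const [IsProbabilityMeasure μ] (A : Mat d) : matInt μ (fun _ => A) = A := by
  ext i j
  simp [matInt]

theorem star_dotProduct_matInt_mulVec (hY : ∀ i j, Integrable (fun ω => Y ω i j) μ)
    (x : Fin d → ℂ) :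
    star x ⬝ᵥ (matInt μ Y *ᵥ x) = ∫ ω, star x ⬝ᵥ (Y ω *ᵥ x) ∂μ := by
  have hterm : ∀ i j, Integrable (fun ω => star (x i) * (Y ω i j * x j)) μ :=
    fun i j => ((hY i j).mul_const _).const_mul _
  simp only [dotProduct, mulVec, Finset.mul_sum, matInt, of_apply, Pi.star_apply]
  rw [integral_finsetSum _ fun i _ => integrable_finsetSum _ fun j _ => hterm i j]
  refine Finset.sum_congr rfl fun i _ => ?_
  rw [integral_finsetSum _ fun j _ => hterm i j]
  refine Finset.sum_congr rfl fun j _ => ?_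
  rw [integral_const_mul, integral_mul_const]

theorem matInt_isHermitian (h : ∀ᵐ ω ∂μ, (Y ω).IsHermitian) : (matInt μ Y).IsHermitian := by
  ext i j
  simp only [conjTranspose_apply, matInt, of_apply, Complex.star_def]
  rw [← integral_conj]
  exact integral_congr_ae (h.mono fun ω hω => hω.apply i j)

theorem matInt_nonneg (hY : ∀ i j, Integrable (fun ω => Y ω i j) μ)
    (h : ∀ᵐ ω ∂μ, 0 ≤ Y ω) : 0 ≤ matInt μ Y := by
  refine (posSemidef_iff_dotProduct_mulVec.2 ⟨?_, fun x => ?_⟩).nonneg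
  · exact matInt_isHermitian (h.mono fun ω hω => hω.posSemidef.isHermitian)
  · rw [star_dotProduct_matInt_mulVec hY]
    exact integral_nonneg_of_ae (h.mono fun ω hω => hω.posSemidef.dotProduct_mulVec_nonneg x)

theorem matInt_mono (hY : ∀ i j, Integrable (fun ω => Y ω i j) μ)
    (hZ : ∀ i j, Integrable (fun ω => Z ω i j) μ) (h : ∀ᵐ ω ∂μ, Y ω ≤ Z ω) :
    matInt μ Y ≤ matInt μ Z := by
  rw [← sub_nonneg, ← matInt_sub hZ hY]
  exact matInt_nonneg (fun i j => (hZ i j).sub (hY i j)) (h.mono fun ω hω => sub_nonneg.2 hω)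

end RandomMatrix

section BoundedRandomMatrix

variable {Ω : Type*} [MeasurableSpace Ω] {μ : Measure Ω} [IsProbabilityMeasure μ] {d : ℕ}
  {X : Ω → Mat d} {c : ℝ}

theorem integrable_matFun_exp_smul_apply (hmeas : Measurable X)
    (hherm : ∀ ω, (X ω).IsHermitian) (hspec : ∀ᵐ ω ∂μ, ∀ x ∈ spectrum ℝ (X ω), |x| ≤ c)
    (θ : ℝ) (i j : Fin d) : Integrable (fun ω => matFun Real.exp (θ • X ω) i j) μ := by
  refine integrable_apply_of_ae_norm_le (measurable_matFun_exp_smul hmeas hherm θ)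
    (K := Fintype.card (Fin d) * Real.exp (c * |θ|)) ?_ i j
  filter_upwards [hspec] with ω hω i j
  rw [matFun_exp_smul (hherm ω)]
  refine (hherm ω).norm_cfc_apply_le (fun x hx => ?_) i j
  rw [abs_of_pos (Real.exp_pos _)]
  exact Real.exp_le_exp.2 ((le_abs_self _).trans (abs_mul_le_of_abs_le (hω x hx)))

theorem integrable_sq_apply (hmeas : Measurable X) (hherm : ∀ ω, (X ω).IsHermitian)
    (hspec : ∀ᵐ ω ∂μ, ∀ x ∈ spectrum ℝ (X ω), |x| ≤ c) (i j : Fin d) :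
    Integrable (fun ω => (X ω ^ 2) i j) μ := by
  refine integrable_apply_of_ae_norm_le ((continuous_pow 2).measurable.comp hmeas)
    (K := Fintype.card (Fin d) * c ^ 2) ?_ i j
  filter_upwards [hspec] with ω hω i j
  rw [Function.comp_apply, ← cfc_pow_id (R := ℝ) (X ω) 2 (hherm ω).isSelfAdjoint]
  refine (hherm ω).norm_cfc_apply_le (fun x hx => ?_) i j
  rw [abs_pow]
  exact pow_le_pow_left₀ (abs_nonneg x) (hω x hx) 2

theorem matInt_matFun_exp_smul_le_one_add (hmeas : Measurable X)
    (hint : ∀ i j, Integrable (fun ω => X ω i j) μ) (hherm : ∀ ω, (X ω).IsHermitian)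
    (hmean : matInt μ X = 0) (hc : 0 < c) (hspec : ∀ᵐ ω ∂μ, ∀ x ∈ spectrum ℝ (X ω), |x| ≤ c)
    (θ : ℝ) :
    matInt μ (fun ω => matFun Real.exp (θ • X ω)) ≤
      1 + psiP c |θ| • matInt μ (fun ω => X ω ^ 2) := by
  have hconst : ∀ i j, Integrable (fun _ : Ω => (1 : Mat d) i j) μ :=
    fun _ _ => integrable_const _
  have hlin : ∀ i j, Integrable (fun ω => (θ • X ω : Mat d) i j) μ :=
    fun i j => (hint i j).smul θ
  have hsq : ∀ i j, Integrable (fun ω => (psiP c |θ| • X ω ^ 2 : Mat d) i j) μ :=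
    fun i j => (integrable_sq_apply hmeas hherm hspec i j).smul (psiP c |θ|)
  have haff : ∀ i j, Integrable (fun ω => (1 + θ • X ω : Mat d) i j) μ :=
    fun i j => (hconst i j).add (hlin i j)
  have hquad : ∀ i j, Integrable (fun ω => (1 + θ • X ω + psiP c |θ| • X ω ^ 2 : Mat d) i j) μ :=
    fun i j => (haff i j).add (hsq i j)
  calc matInt μ (fun ω => matFun Real.exp (θ • X ω))
      ≤ matInt μ (fun ω => 1 + θ • X ω + psiP c |θ| • X ω ^ 2) := by
        refine matInt_mono (integrable_matFun_exp_smul_apply hmeas hherm hspec θ) hquad ?_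
        filter_upwards [hspec] with ω hω
        rw [matFun_exp_smul (hherm ω), ← (hherm ω).cfc_quadratic]
        exact cfc_le_cfc fun x hx => exp_mul_le_one_add_add_psiP_mul_sq hc θ (hω x hx)
    _ = 1 + psiP c |θ| • matInt μ (fun ω => X ω ^ 2) := by
        rw [matInt_add haff hsq, matInt_add hconst hlin,
          matInt_const, matInt_smul, matInt_smul, hmean, smul_zero, add_zero]

theorem algebraMap_exp_le_matInt_matFun_exp_smul (hmeas : Measurable X)
    (hherm : ∀ ω, (X ω).IsHermitian) (hspec : ∀ᵐ ω ∂μ, ∀ x ∈ spectrum ℝ (X ω), |x| ≤ c)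
    (θ : ℝ) :
    algebraMap ℝ (Mat d) (Real.exp (-(c * |θ|))) ≤
      matInt μ (fun ω => matFun Real.exp (θ • X ω)) := by
  rw [← matInt_const (μ := μ) (algebraMap ℝ (Mat d) _)]
  refine matInt_mono (fun _ _ => integrable_const _)
    (integrable_matFun_exp_smul_apply hmeas hherm hspec θ) ?_
  filter_upwards [hspec] with ω hω
  rw [matFun_exp_smul (hherm ω)]
  refine algebraMap_le_cfc _ _ _ (fun x hx => Real.exp_le_exp.2 ?_)
    (finite_real_spectrum.continuousOn _)
  exact neg_le_of_abs_le (abs_mul_le_of_abs_le (hω x hx))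

end BoundedRandomMatrix

theorem statement9_general {d : ℕ}
    {Ω : Type*} [MeasurableSpace Ω] (μ : Measure Ω) [IsProbabilityMeasure μ]
    (X : Ω → Mat d)
    (hmeas : Measurable X)
    (hint : ∀ p q, Integrable (fun ω => X ω p q) μ)
    (hherm : ∀ ω, (X ω).IsHermitian)
    (hmean : matInt μ X = 0)
    (c : ℝ) (hc : 0 < c)
    (hbdd : ∀ᵐ ω ∂μ, opNorm (X ω) ≤ c) :
    ∀ θ : ℝ,
      loewnerLE (matInt μ (fun ω => matFun Real.exp (θ • X ω)))
        (matFun Real.exp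
          (((Real.exp (c * |θ|) - c * |θ| - 1) / c ^ 2) • matInt μ (fun ω => (X ω) ^ 2))) ∧
      loewnerLE (matFun Real.log (matInt μ (fun ω => matFun Real.exp (θ • X ω))))
        (((Real.exp (c * |θ|) - c * |θ| - 1) / c ^ 2) • matInt μ (fun ω => (X ω) ^ 2)) := by
  intro θ
  have hspec : ∀ᵐ ω ∂μ, ∀ x ∈ spectrum ℝ (X ω), |x| ≤ c :=
    hbdd.mono fun ω h => abs_le_of_mem_spectrum_of_opNorm_le (hherm ω) h
  have hN : (matInt μ fun ω => matFun Real.exp (θ • X ω)).IsHermitian :=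
    matInt_isHermitian <| ae_of_all _ fun ω => by
      rw [matFun_exp_smul (hherm ω)]
      exact cfc_predicate _ _
  have hV : (psiP c |θ| • matInt μ fun ω => X ω ^ 2).IsHermitian :=
    (matInt_isHermitian (ae_of_all _ fun ω => (hherm ω).pow 2)).smul (.all _)
  have hupper := matInt_matFun_exp_smul_le_one_add hmeas hint hherm hmean hc hspec θ
  have hlower := algebraMap_exp_le_matInt_matFun_exp_smul hmeas hherm hspec θ
  show loewnerLE _ (matFun Real.exp (psiP c |θ| • _)) ∧ loewnerLE _ (psiP c |θ| • _)
  constructor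
  · rw [loewnerLE_iff, matFun_eq_cfc _ hV]
    exact hupper.trans hV.one_add_le_cfc_exp
  · rw [loewnerLE_iff, matFun_eq_cfc _ hN]
    exact (hN.cfc_log_le_sub_one (Real.exp_pos _) hlower).trans (sub_le_iff_le_add'.2 hupper)

/-- For a mean-zero random Hermitian matrix `X` with `‖X‖ ≤ c` a.s.,
`E[exp(θX)] ⪯ exp(ψ_{P,c}(|θ|) E[X²])` and consequently
`log E[exp(θX)] ⪯ ψ_{P,c}(|θ|) E[X²]`, where `ψ_{P,c}(u) = (e^{cu} - cu - 1)/c²`. -/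
theorem statement9 {d : ℕ} (hd : 1 ≤ d)
    {Ω : Type*} [MeasurableSpace Ω] (μ : Measure Ω) [IsProbabilityMeasure μ]
    (X : Ω → Mat d)
    (hmeas : Measurable X)
    (hint : ∀ p q, Integrable (fun ω => X ω p q) μ)
    (hherm : ∀ ω, (X ω).IsHermitian)
    (hmean : matInt μ X = 0)
    (c : ℝ) (hc : 0 < c)
    (hbdd : ∀ᵐ ω ∂μ, opNorm (X ω) ≤ c) :
    ∀ θ : ℝ,
      loewnerLE (matInt μ (fun ω => matFun Real.exp (θ • X ω)))
        (matFun Real.exp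
          (((Real.exp (c * |θ|) - c * |θ| - 1) / c ^ 2) • matInt μ (fun ω => (X ω) ^ 2))) ∧
      loewnerLE (matFun Real.log (matInt μ (fun ω => matFun Real.exp (θ • X ω))))
        (((Real.exp (c * |θ|) - c * |θ| - 1) / c ^ 2) • matInt μ (fun ω => (X ω) ^ 2)) :=
  statement9_general μ X hmeas hint hherm hmean c hc hbdd
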